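/- Let p: ℝ^{d_x} → ℝ, q: ℝ^{d_y} → ℝ be convex differentiable, R: ℝ^{d_x}×ℝ^{d_y} → ℝ differentiable with R(·, y) convex and R(x, ·) concave, and let (x*, y*) be a saddle point of F(x,y) = p(x) + R(x,y) - q(y). Suppose (x̂, ŷ) is a saddle point of the regularized problem F_ε(x,y) = p(x) + (ε/(16 D_x²))‖x‖² + R(x,y) - q(y) - (ε/(16 D_y²))‖y‖², where ‖x*‖ ≤ D_x and ‖y*‖ ≤ D_y. If ‖x̂ - x̂*‖² + ‖ŷ - ŷ*‖² ≤ ε/2 where (x̂*, ŷ*) is the exact saddle point of F_ε, then the regularized saddle point (x̂*, ŷ*) satisfies (ε/(16 D_x²))‖x̂* - x*‖² + (ε/(16 D_y²))‖ŷ* - y*‖² ≤ (ε/(16 D_x²))‖x*‖² + (ε/(16 D_y²))‖y*‖² ≤ ε/8. -/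

import Mathlib

open RealInnerProductSpace Filter Topology

/-!
If `g` is convex and `x₀` minimizes `g + a‖·‖²`, then `g + a‖·‖² - a‖· - x₀‖²` is `g` plus an
affine function, hence convex, and it exceeds its value at `x₀` by at least `-a‖· - x₀‖²`; a
convex function with such a second-order lower bound is minimized at `x₀`. This quadratic growth,
applied to `x ↦ p x + R x ŷ*` and `y ↦ q y - R x̂* y` and added to the saddle inequalities
`F x* ŷ* ≤ F x* y* ≤ F x̂* y*`, cancels every value of `p`, `q` and `R`.
-/

theorem ConvexOn.le_of_forall_sub_mul_norm_sq_le {E : Type*} [SeminormedAddCommGroup E]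
    [NormedSpace ℝ E] {s : Set E} {ψ : E → ℝ} (hψ : ConvexOn ℝ s ψ) {x₀ x : E}
    (hx₀ : x₀ ∈ s) (hx : x ∈ s) (c : ℝ)
    (hbound : ∀ y ∈ s, ψ x₀ - c * ‖y - x₀‖ ^ 2 ≤ ψ y) : ψ x₀ ≤ ψ x := by
  have hlim : Tendsto (fun t : ℝ => ψ x + c * t * ‖x - x₀‖ ^ 2) (𝓝[>] 0) (𝓝 (ψ x)) := by
    have : Continuous fun t : ℝ => ψ x + c * t * ‖x - x₀‖ ^ 2 := by fun_prop
    simpa using (this.tendsto 0).mono_left nhdsWithin_le_nhds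
  refine ge_of_tendsto hlim ?_
  filter_upwards [Ioo_mem_nhdsGT one_pos] with t ⟨ht₀, ht₁⟩
  have hseg : ψ (t • x + (1 - t) • x₀) ≤ t * ψ x + (1 - t) * ψ x₀ :=
    hψ.2 hx hx₀ ht₀.le (sub_nonneg.2 ht₁.le) (add_sub_cancel t 1)
  have hnear := hbound _ (hψ.1 hx hx₀ ht₀.le (sub_nonneg.2 ht₁.le) (add_sub_cancel t 1))
  have hdist : ‖t • x + (1 - t) • x₀ - x₀‖ ^ 2 = t ^ 2 * ‖x - x₀‖ ^ 2 := by
    rw [show t • x + (1 - t) • x₀ - x₀ = t • (x - x₀) by module, norm_smul, mul_pow,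
      Real.norm_eq_abs, sq_abs]
  rw [hdist] at hnear
  refine le_of_mul_le_mul_left ?_ ht₀
  linear_combination hnear + hseg

theorem ConvexOn.add_mul_norm_sub_sq_le_of_isMinOn {E : Type*} [NormedAddCommGroup E]
    [InnerProductSpace ℝ E] {g : E → ℝ} (hg : ConvexOn ℝ Set.univ g) (a : ℝ) {x₀ : E}
    (hmin : IsMinOn (fun x => g x + a * ‖x‖ ^ 2) Set.univ x₀) (x : E) :
    g x₀ + a * ‖x₀‖ ^ 2 + a * ‖x - x₀‖ ^ 2 ≤ g x + a * ‖x‖ ^ 2 := by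
  have hψ : ConvexOn ℝ Set.univ fun y => g y + a * (‖y‖ ^ 2 - ‖y - x₀‖ ^ 2) := by
    have hlin := ((innerₛₗ ℝ ((2 * a) • x₀)).convexOn convex_univ).add_const (-(a * ‖x₀‖ ^ 2))
    refine (hg.add hlin).congr fun y _ => ?_
    simp only [map_smul, LinearMap.coe_smul, coe_innerₛₗ_apply, Pi.add_apply, Pi.smul_apply,
      smul_eq_mul, norm_sub_sq_real, real_inner_comm x₀ y]
    ring
  have hψmin := hψ.le_of_forall_sub_mul_norm_sq_le (Set.mem_univ x₀) (Set.mem_univ x) a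
    fun y _ => by
      have hy := isMinOn_univ_iff.1 hmin y
      simp only [sub_self, norm_zero] at hy ⊢
      linarith
  simp only [sub_self, norm_zero] at hψmin
  linarith

theorem div_sq_mul_norm_sq_le {E : Type*} [SeminormedAddCommGroup E] {c D : ℝ} (hc : 0 ≤ c)
    {v : E} (hv : ‖v‖ ≤ D) : c / D ^ 2 * ‖v‖ ^ 2 ≤ c := by
  rw [div_mul_eq_mul_div, mul_div_assoc]
  exact mul_le_of_le_one_right hc
    (div_le_one_of_le₀ (pow_le_pow_left₀ (norm_nonneg v) hv 2) (sq_nonneg D))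

theorem stmt8_general {dx dy : ℕ}
    (p : EuclideanSpace ℝ (Fin dx) → ℝ) (q : EuclideanSpace ℝ (Fin dy) → ℝ)
    (R : EuclideanSpace ℝ (Fin dx) → EuclideanSpace ℝ (Fin dy) → ℝ)
    (hpconv : ConvexOn ℝ Set.univ p) (hqconv : ConvexOn ℝ Set.univ q)
    (hRx : ∀ y, ConvexOn ℝ Set.univ (fun x => R x y))
    (hRy : ∀ x, ConcaveOn ℝ Set.univ (fun y => R x y))
    (F : EuclideanSpace ℝ (Fin dx) → EuclideanSpace ℝ (Fin dy) → ℝ)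
    (hF : ∀ x y, F x y = p x + R x y - q y)
    (ε Dx Dy : ℝ) (hε : 0 < ε)
    (Fe : EuclideanSpace ℝ (Fin dx) → EuclideanSpace ℝ (Fin dy) → ℝ)
    (hFe : ∀ x y, Fe x y =
      p x + ε / (16 * Dx ^ 2) * ‖x‖ ^ 2 + R x y - q y - ε / (16 * Dy ^ 2) * ‖y‖ ^ 2)
    (xs : EuclideanSpace ℝ (Fin dx)) (ys : EuclideanSpace ℝ (Fin dy))
    (hsaddle : ∀ x y, F xs y ≤ F xs ys ∧ F xs ys ≤ F x ys)
    (hxs : ‖xs‖ ≤ Dx) (hys : ‖ys‖ ≤ Dy)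
    (xrs : EuclideanSpace ℝ (Fin dx)) (yrs : EuclideanSpace ℝ (Fin dy))
    (hrsaddle : ∀ x y, Fe xrs y ≤ Fe xrs yrs ∧ Fe xrs yrs ≤ Fe x yrs) :
    ε / (16 * Dx ^ 2) * ‖xrs - xs‖ ^ 2 + ε / (16 * Dy ^ 2) * ‖yrs - ys‖ ^ 2 ≤
      ε / (16 * Dx ^ 2) * ‖xs‖ ^ 2 + ε / (16 * Dy ^ 2) * ‖ys‖ ^ 2 ∧
    ε / (16 * Dx ^ 2) * ‖xs‖ ^ 2 + ε / (16 * Dy ^ 2) * ‖ys‖ ^ 2 ≤ ε / 8 := by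
  set a := ε / (16 * Dx ^ 2)
  set b := ε / (16 * Dy ^ 2)
  have hxgrowth : p xrs + R xrs yrs + a * ‖xrs‖ ^ 2 + a * ‖xs - xrs‖ ^ 2 ≤
      p xs + R xs yrs + a * ‖xs‖ ^ 2 :=
    (hpconv.add (hRx yrs)).add_mul_norm_sub_sq_le_of_isMinOn a
      (isMinOn_univ_iff.2 fun x => by
        have := (hrsaddle x yrs).2; simp only [hFe, Pi.add_apply] at this ⊢; linarith) xs
  have hygrowth : q yrs - R xrs yrs + b * ‖yrs‖ ^ 2 + b * ‖ys - yrs‖ ^ 2 ≤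
      q ys - R xrs ys + b * ‖ys‖ ^ 2 :=
    (hqconv.sub (hRy xrs)).add_mul_norm_sub_sq_le_of_isMinOn b
      (isMinOn_univ_iff.2 fun y => by
        have := (hrsaddle xrs y).1; simp only [hFe, Pi.sub_apply] at this ⊢; linarith) ys
  have hsy := (hsaddle xs yrs).1
  have hsx := (hsaddle xrs ys).2
  rw [hF, hF] at hsy hsx
  refine ⟨?_, ?_⟩
  · have ha : 0 ≤ a := div_nonneg hε.le (by positivity)
    have hb : 0 ≤ b := div_nonneg hε.le (by positivity)
    rw [norm_sub_rev xrs, norm_sub_rev yrs]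
    linarith [mul_nonneg ha (sq_nonneg ‖xrs‖), mul_nonneg hb (sq_nonneg ‖yrs‖)]
  · have hε16 : 0 ≤ ε / 16 := by positivity
    have hax := div_sq_mul_norm_sq_le hε16 hxs
    have hby := div_sq_mul_norm_sq_le hε16 hys
    rw [div_div] at hax hby
    linarith

/-- Regularization lemma for convex-concave saddle point problems: the saddle
point `(xrs, yrs)` of the regularized objective `F_ε` stays close to the saddle
point `(xs, ys)` of `F(x,y) = p x + R x y - q y`:
`(ε/(16Dx²))‖xrs - xs‖² + (ε/(16Dy²))‖yrs - ys‖² ≤ (ε/(16Dx²))‖xs‖² + (ε/(16Dy²))‖ys‖² ≤ ε/8`. -/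
theorem stmt8 {dx dy : ℕ}
    (p : EuclideanSpace ℝ (Fin dx) → ℝ) (q : EuclideanSpace ℝ (Fin dy) → ℝ)
    (R : EuclideanSpace ℝ (Fin dx) → EuclideanSpace ℝ (Fin dy) → ℝ)
    (hp : Differentiable ℝ p) (hq : Differentiable ℝ q)
    (hpconv : ConvexOn ℝ Set.univ p) (hqconv : ConvexOn ℝ Set.univ q)
    (hRdiff : Differentiable ℝ (fun z : EuclideanSpace ℝ (Fin dx) × EuclideanSpace ℝ (Fin dy) => R z.1 z.2))
    (hRx : ∀ y, ConvexOn ℝ Set.univ (fun x => R x y))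
    (hRy : ∀ x, ConcaveOn ℝ Set.univ (fun y => R x y))
    (F : EuclideanSpace ℝ (Fin dx) → EuclideanSpace ℝ (Fin dy) → ℝ)
    (hF : ∀ x y, F x y = p x + R x y - q y)
    (ε Dx Dy : ℝ) (hε : 0 < ε) (hDx : 0 < Dx) (hDy : 0 < Dy)
    (Fe : EuclideanSpace ℝ (Fin dx) → EuclideanSpace ℝ (Fin dy) → ℝ)
    (hFe : ∀ x y, Fe x y =
      p x + ε / (16 * Dx ^ 2) * ‖x‖ ^ 2 + R x y - q y - ε / (16 * Dy ^ 2) * ‖y‖ ^ 2)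
    (xs : EuclideanSpace ℝ (Fin dx)) (ys : EuclideanSpace ℝ (Fin dy))
    (hsaddle : ∀ x y, F xs y ≤ F xs ys ∧ F xs ys ≤ F x ys)
    (hxs : ‖xs‖ ≤ Dx) (hys : ‖ys‖ ≤ Dy)
    (xrs : EuclideanSpace ℝ (Fin dx)) (yrs : EuclideanSpace ℝ (Fin dy))
    (hrsaddle : ∀ x y, Fe xrs y ≤ Fe xrs yrs ∧ Fe xrs yrs ≤ Fe x yrs)
    (xh : EuclideanSpace ℝ (Fin dx)) (yh : EuclideanSpace ℝ (Fin dy))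
    (hclose : ‖xh - xrs‖ ^ 2 + ‖yh - yrs‖ ^ 2 ≤ ε / 2) :
    ε / (16 * Dx ^ 2) * ‖xrs - xs‖ ^ 2 + ε / (16 * Dy ^ 2) * ‖yrs - ys‖ ^ 2 ≤
      ε / (16 * Dx ^ 2) * ‖xs‖ ^ 2 + ε / (16 * Dy ^ 2) * ‖ys‖ ^ 2 ∧
    ε / (16 * Dx ^ 2) * ‖xs‖ ^ 2 + ε / (16 * Dy ^ 2) * ‖ys‖ ^ 2 ≤ ε / 8 :=
  stmt8_general p q R hpconv hqconv hRx hRy F hF ε Dx Dy hε Fe hFe xs ys hsaddle hxs hys xrs yrs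
    hrsaddle
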